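/- For every nonempty pair-word w (a concatenation of blocks from {41, 43, 23, 25}) and every j in {1,2,3,4}, the cyclic word T_j(w) is cyclically equal to a pair-word; in particular, the length of T_j(w) is even. -/

import Mathlib

/-- `sigma5 j x` is the representative in `{1,...,5}` of `x - j` mod 5. -/
def sigma5 (j x : ℕ) : ℕ := (x + 4 - j) % 5 + 1

/-- Position of a letter along the path graph 1—4—3—2—5. -/
def pos5 (x : ℕ) : ℕ :=
  match x with
  | 1 => 0 | 4 => 1 | 3 => 2 | 2 => 3 | 5 => 4 | _ => 0

/-- The vertex at a given position of the path graph 1—4—3—2—5. -/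
def vtx5 (i : ℕ) : ℕ := [1, 4, 3, 2, 5].getD i 0

/-- `ins5 x y` is the word of interior vertices, in order, of the unique simple
path from `x` to `y` in the path graph 1—4—3—2—5 (empty if `x = y`). -/
def ins5 (x y : ℕ) : List ℕ :=
  if pos5 x < pos5 y then
    (List.range (pos5 y - pos5 x - 1)).map (fun k => vtx5 (pos5 x + 1 + k))
  else
    (List.range (pos5 x - pos5 y - 1)).map (fun k => vtx5 (pos5 x - 1 - k))

/-- Graph distance in the path graph 1—4—3—2—5. -/
def dist5 (x y : ℕ) : ℕ := max (pos5 x) (pos5 y) - min (pos5 x) (pos5 y)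

/-- Linear transformation `T_j^{lin}`: subtract `j` mod 5 from each letter and insert,
between consecutive letters, the interior vertices of the connecting path (no wrap-around). -/
def Tlin (j : ℕ) : List ℕ → List ℕ
  | [] => []
  | [x] => [sigma5 j x]
  | x :: y :: rest => (sigma5 j x :: ins5 (sigma5 j x) (sigma5 j y)) ++ Tlin j (y :: rest)

/-- Cyclic transformation `T_j`: as `Tlin`, with the wrap-around insertion from the
last letter back to the first appended at the end. -/
def Tcyc (j : ℕ) (w : List ℕ) : List ℕ :=
  Tlin j w ++ ins5 (sigma5 j (w.getLastD 0)) (sigma5 j (w.headD 0))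

/-- A pair-word: a finite concatenation of the two-letter blocks 41, 43, 23, 25. -/
def IsPairWord (w : List ℕ) : Prop :=
  ∃ bs : List (List ℕ), (∀ b ∈ bs, b ∈ [[4,1],[4,3],[2,3],[2,5]]) ∧ w = bs.flatten

/-- `n`-fold repetition of a word. -/
def wpow (w : List ℕ) (n : ℕ) : List ℕ := (List.replicate n w).flatten

/-!
The path 1—4—3—2—5 alternates between even and odd letters, and the blocks 41, 43, 23, 25 are
exactly its edges read from the even end. So a pair-word alternates parity: its cyclically
consecutive letters are distinct, and stay distinct under `σ_j`, which is injective on the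
alphabet. Hence `T_j(w)`, which joins them by paths of `G`, is a closed walk in `G`. Read from an
even letter, a closed walk splits into edges from an even to an odd letter, that is, into blocks.
-/

def PathAdj (a b : ℕ) : Prop := a ∈ Finset.Icc 1 5 ∧ b ∈ Finset.Icc 1 5 ∧ dist5 a b = 1

instance : DecidableRel PathAdj := fun _ _ => inferInstanceAs (Decidable (_ ∧ _ ∧ _))

theorem PathAdj.odd_add {a b : ℕ} (h : PathAdj a b) : Odd (a + b) := by
  have key : ∀ a ∈ Finset.Icc 1 5, ∀ b ∈ Finset.Icc 1 5, dist5 a b = 1 → Odd (a + b) := by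
    decide
  exact key a h.1 b h.2.1 h.2.2

theorem PathAdj.mem_blocks {a b : ℕ} (h : PathAdj a b) (ha : Even a) :
    [a, b] ∈ ([[4,1],[4,3],[2,3],[2,5]] : List (List ℕ)) := by
  have key : ∀ a ∈ Finset.Icc 1 5, ∀ b ∈ Finset.Icc 1 5, dist5 a b = 1 → Even a →
      [a, b] ∈ ([[4,1],[4,3],[2,3],[2,5]] : List (List ℕ)) := by
    decide
  exact key a h.1 b h.2.1 h.2.2 ha

theorem isChain_pathAdj_ins5 : ∀ x ∈ Finset.Icc 1 5, ∀ y ∈ Finset.Icc 1 5, x ≠ y →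
    (x :: ins5 x y ++ [y]).IsChain PathAdj := by
  decide

theorem sigma5_mem_Icc (j x : ℕ) : sigma5 j x ∈ Finset.Icc 1 5 := by
  simp only [sigma5, Finset.mem_Icc]
  omega

theorem sigma5_injOn {j : ℕ} (hj : j ≤ 5) : Set.InjOn (sigma5 j) (Finset.Icc 1 5 : Set ℕ) := by
  intro x hx y hy h
  simp only [Finset.coe_Icc, Set.mem_Icc, sigma5] at hx hy h
  omega

namespace IsPairWord

theorem mem_Icc {w : List ℕ} (hw : IsPairWord w) {a : ℕ} (ha : a ∈ w) : a ∈ Finset.Icc 1 5 := by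
  obtain ⟨bs, hbs, rfl⟩ := hw
  obtain ⟨b, hb, hab⟩ := List.mem_flatten.mp ha
  have key : ∀ b ∈ ([[4,1],[4,3],[2,3],[2,5]] : List (List ℕ)), ∀ a ∈ b, a ∈ Finset.Icc 1 5 := by
    decide
  exact key b (hbs b hb) a hab

theorem even_length {w : List ℕ} (hw : IsPairWord w) : Even w.length := by
  obtain ⟨bs, hbs, rfl⟩ := hw
  rw [List.length_flatten]
  refine even_iff_two_dvd.mpr (List.dvd_sum fun n hn => ?_)
  obtain ⟨b, hb, rfl⟩ := List.mem_map.mp hn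
  have := hbs b hb
  fin_cases this <;> decide

theorem isChain_append {w : List ℕ} (hw : IsPairWord w) {y : ℕ} (hy : Even y) :
    (w ++ [y]).IsChain fun a b => Odd (a + b) := by
  obtain ⟨bs, hbs, rfl⟩ := hw
  induction bs using List.reverseRecOn generalizing y with
  | nil => simp
  | append_singleton bs b ih =>
    have hb := hbs b (by simp)
    obtain ⟨e, o, rfl, he, heo, hoy⟩ : ∃ e o, b = [e, o] ∧ Even e ∧ Odd (e + o) ∧ Odd (o + y) := by
      fin_cases hb <;> exact ⟨_, _, rfl, by decide, by decide, Odd.add_even (by decide) hy⟩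
    have hpre : (bs.flatten ++ [e]).IsChain fun a b => Odd (a + b) :=
      ih he fun b hb => hbs b (by simp [hb])
    simpa using hpre.append_overlap (l₃ := [o, y]) (by simp [heo, hoy]) (by simp)

theorem even_head {x : ℕ} {t : List ℕ} (hw : IsPairWord (x :: t)) : Even x := by
  obtain ⟨_ | ⟨b, bs⟩, hbs, h⟩ := hw
  · simp at h
  · have hb := hbs b (by simp)
    fin_cases hb <;> simp_all [List.flatten_cons] <;> decide

end IsPairWord

theorem isPairWord_of_isChain : ∀ l : List ℕ, l.IsChain PathAdj →
    (∀ a ∈ l.head?, Even a) → (∀ a ∈ l.getLast?, Odd a) → IsPairWord l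
  | [], _, _, _ => ⟨[], by simp, rfl⟩
  | [a], _, h₁, h₂ => absurd (h₁ a rfl) (Nat.not_even_iff_odd.mpr (h₂ a rfl))
  | a :: b :: t, hc, h₁, h₂ => by
    obtain ⟨hab, hbt⟩ := List.isChain_cons_cons.mp hc
    have ha : Even a := h₁ a rfl
    have hblock := hab.mem_blocks ha
    have hb : Odd b := (Nat.odd_add'.mp hab.odd_add).mpr ha
    cases t with
    | nil => exact ⟨[[a, b]], by simpa using hblock, rfl⟩
    | cons c t =>
      obtain ⟨hbc, hct⟩ := List.isChain_cons_cons.mp hbt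
      have hc : Even c := (Nat.odd_add.mp hbc.odd_add).mp hb
      obtain ⟨bs, hbs, hflat⟩ := isPairWord_of_isChain (c :: t) hct
        (by simpa using hc) (fun x hx => h₂ x (by simpa using hx))
      exact ⟨[a, b] :: bs, List.forall_mem_cons.mpr ⟨hblock, hbs⟩, by simp [hflat]⟩

theorem exists_isPairWord_isRotated_of_isChain {l : List ℕ} {a : ℕ}
    (hl : (l ++ [a]).head? = some a) (hwalk : (l ++ [a]).IsChain PathAdj) :
    ∃ p, IsPairWord p ∧ l ~r p := by
  obtain rfl | ⟨t, rfl⟩ : l = [] ∨ ∃ t, l = a :: t := by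
    cases l <;> simp_all
  · exact ⟨[], ⟨[], by simp, rfl⟩, .refl _⟩
  obtain ⟨hchain, -, hclose⟩ := List.isChain_append.mp hwalk
  have hlast : ∀ z ∈ (a :: t).getLast?, PathAdj z a := fun z hz => hclose z hz a rfl
  by_cases ha : Even a
  · refine ⟨a :: t, isPairWord_of_isChain _ hchain (by simpa using ha) fun z hz => ?_, .refl _⟩
    exact (Nat.odd_add.mp (hlast z hz).odd_add).mpr ha
  · have ha : Odd a := Nat.not_even_iff_odd.mp ha
    cases t with
    | nil => exact absurd ⟨a, rfl⟩ (Nat.not_even_iff_odd.mpr (hlast a rfl).odd_add)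
    | cons c t =>
      have hc : Even c := (Nat.odd_add.mp (List.isChain_cons_cons.mp hchain).1.odd_add).mp ha
      rw [List.cons_append] at hwalk
      refine ⟨c :: t ++ [a], isPairWord_of_isChain _ hwalk.tail (by simpa using hc) ?_,
        ⟨1, by simp⟩⟩
      intro z hz
      rw [List.getLast?_concat, Option.mem_some_iff] at hz
      exact hz ▸ ha

def fillPath : List ℕ → List ℕ
  | [] => []
  | [x] => [x]
  | x :: y :: rest => x :: ins5 x y ++ fillPath (y :: rest)

theorem head?_fillPath : ∀ v : List ℕ, (fillPath v).head? = v.head?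
  | [] => rfl
  | [_] => rfl
  | _ :: _ :: _ => rfl

theorem fillPath_cons_append_singleton (y : ℕ) :
    ∀ (x : ℕ) (t : List ℕ),
      fillPath (x :: t ++ [y]) = fillPath (x :: t) ++ ins5 (t.getLastD x) y ++ [y]
  | x, [] => by simp [fillPath]
  | x, z :: t => by
    rw [List.cons_append, List.cons_append, fillPath, ← List.cons_append,
      fillPath_cons_append_singleton y z t, List.getLastD_cons, fillPath]
    simp

theorem isChain_pathAdj_fillPath : ∀ v : List ℕ, (∀ a ∈ v, a ∈ Finset.Icc 1 5) →
    v.IsChain (· ≠ ·) → (fillPath v).IsChain PathAdj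
  | [], _, _ => .nil
  | [_], _, _ => .singleton _
  | x :: y :: rest, hv, hc => by
    obtain ⟨hxy, hrest⟩ := List.isChain_cons_cons.mp hc
    have ih := isChain_pathAdj_fillPath (y :: rest) (fun a ha => hv a (by simp [ha])) hrest
    obtain ⟨s, hs⟩ : ∃ s, fillPath (y :: rest) = y :: s := by
      have := head?_fillPath (y :: rest)
      cases h : fillPath (y :: rest) <;> simp_all
    have hstep := isChain_pathAdj_ins5 x (hv x (by simp)) y (hv y (by simp)) hxy
    rw [hs] at ih
    rw [fillPath, hs]
    simpa using hstep.append_overlap (l₃ := s) ih (by simp)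

theorem Tlin_eq_fillPath_map (j : ℕ) : ∀ w : List ℕ, Tlin j w = fillPath (w.map (sigma5 j))
  | [] => rfl
  | [_] => rfl
  | x :: y :: rest => by
    simp [Tlin, fillPath, Tlin_eq_fillPath_map j (y :: rest)]

theorem Tcyc_cons_append (j x : ℕ) (t : List ℕ) :
    Tcyc j (x :: t) ++ [sigma5 j x] = fillPath ((x :: t ++ [x]).map (sigma5 j)) := by
  rw [Tcyc, Tlin_eq_fillPath_map, List.headD_cons, List.getLastD_cons,
    ← List.getLastD_map (f := sigma5 j), List.map_append, List.map_cons, List.map_singleton,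
    fillPath_cons_append_singleton]

theorem isChain_ne_map_sigma5 {j : ℕ} (hj : j ≤ 5) {l : List ℕ}
    (hl : ∀ a ∈ l, a ∈ Finset.Icc 1 5) (hc : l.IsChain fun a b => Odd (a + b)) :
    (l.map (sigma5 j)).IsChain (· ≠ ·) := by
  rw [List.isChain_map]
  refine (List.IsChain.iff_mem.mp hc).imp fun a b ⟨ha, hb, hab⟩ hσ => ?_
  obtain rfl := sigma5_injOn hj (hl a ha) (hl b hb) hσ
  exact Nat.not_even_iff_odd.mpr hab ⟨a, rfl⟩

theorem IsPairWord.exists_isPairWord_isRotated_Tcyc {w : List ℕ} (hw : IsPairWord w) {j : ℕ}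
    (hj : j ≤ 5) : ∃ p, IsPairWord p ∧ Tcyc j w ~r p := by
  rcases w with _ | ⟨x, t⟩
  · exact ⟨[], ⟨[], by simp, rfl⟩, by simp [Tcyc, Tlin, ins5]⟩
  have hmem : ∀ a ∈ x :: t ++ [x], a ∈ Finset.Icc 1 5 := fun a ha => by
    rcases List.mem_append.mp ha with ha | ha
    · exact hw.mem_Icc ha
    · exact List.mem_singleton.mp ha ▸ hw.mem_Icc List.mem_cons_self
  refine exists_isPairWord_isRotated_of_isChain (a := sigma5 j x) ?_ ?_
  · rw [Tcyc_cons_append, head?_fillPath]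
    rfl
  rw [Tcyc_cons_append]
  refine isChain_pathAdj_fillPath _ (fun a ha => ?_) ?_
  · obtain ⟨b, -, rfl⟩ := List.mem_map.mp ha
    exact sigma5_mem_Icc j b
  · exact isChain_ne_map_sigma5 hj hmem (hw.isChain_append hw.even_head)

theorem stmt9_general (w : List ℕ) (hw : IsPairWord w) (j : ℕ)
    (hj : j ∈ Finset.Icc 1 4) :
    (∃ p : List ℕ, IsPairWord p ∧ Tcyc j w ~r p) ∧ Even (Tcyc j w).length := by
  obtain ⟨p, hp, hrot⟩ := hw.exists_isPairWord_isRotated_Tcyc (j := j)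
    (by simp only [Finset.mem_Icc] at hj; omega)
  exact ⟨⟨p, hp, hrot⟩, hrot.perm.length_eq ▸ hp.even_length⟩

theorem stmt9 (w : List ℕ) (hw : IsPairWord w) (hne : w ≠ []) (j : ℕ)
    (hj : j ∈ Finset.Icc 1 4) :
    (∃ p : List ℕ, IsPairWord p ∧ Tcyc j w ~r p) ∧ Even (Tcyc j w).length :=
  stmt9_general w hw j hj
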